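/- For every x ∈ 𝔤 and every λ ∈ W*, the commutator of operators [f_x, D_λ] equals D_{x·λ}, where D_λ := Σ_α λ(e_α) D_α and the dual action of 𝔤 on W* is given by (x·λ)(w) = −λ(x·w). -/

import Mathlib

/-!
In the Weyl algebra `⁅∂_β, X_γ⁆ = δ_{βγ}` and `⁅∂_β, ∂_α⁆ = 0`, so `∂_β` brackets both orderings
`X_γ ∂_α` and `∂_α X_α` of a quadratic piece to `δ_{βγ} ∂_α`: the normal ordering on `J` only adds
the central constant `1`. Summing, `⁅D_β, f_x⁆ = Σ_α x_β^α ∂_α`; pairing with `λ` and expanding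
`λ(x·e_α)` in the basis gives `⁅D_λ, f_x⁆ = Σ_α λ(x·e_α) ∂_α = -D_{x·λ}`.
-/

open scoped Classical

/-- Multiplication by the variable `X γ` on the bosonic Fock space `K[X_α : α ∈ I]`. -/
noncomputable def Mop (K : Type*) [CommSemiring K] {I : Type*} (γ : I) :
    Module.End K (MvPolynomial I K) :=
  LinearMap.mulLeft K (MvPolynomial.X γ)

/-- The partial derivative `∂/∂X_α` on the bosonic Fock space `K[X_α : α ∈ I]`. -/
noncomputable def Dop (K : Type*) [CommSemiring K] {I : Type*} (α : I) :
    Module.End K (MvPolynomial I K) :=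
  (MvPolynomial.pderiv α).toLinearMap

/-- The normally ordered quadratic piece `N(γ,α)`. -/
noncomputable def Nop (K : Type*) [CommSemiring K] {I : Type*} (J : Set I) (γ α : I) :
    Module.End K (MvPolynomial I K) :=
  if γ = α ∧ α ∈ J then Dop K α ∘ₗ Mop K α else Mop K γ ∘ₗ Dop K α

/-- The normally ordered quadratic operator
`f_x = Σ_{α,γ∈I} x_γ^α N(γ,α)` on bosonic Fock space, where
`x_γ^α = (b.repr ⁅x, b α⁆) γ` are the matrix coefficients of `x` on `W`. -/
noncomputable def fock {K : Type*} [Field K] {L : Type*} [LieRing L] [LieAlgebra K L]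
    {W : Type*} [AddCommGroup W] [Module K W] [LieRingModule L W] [LieModule K L W]
    {I : Type*} [Fintype I] (b : Module.Basis I K W) (J : Set I) (x : L) :
    Module.End K (MvPolynomial I K) :=
  ∑ α : I, ∑ γ : I, b.repr ⁅x, b α⁆ γ • Nop K J γ α

open MvPolynomial in
theorem MvPolynomial.lie_pderiv_pderiv {R σ : Type*} [CommRing R] (i j : σ) :
    ⁅(pderiv i : Derivation R (MvPolynomial σ R) (MvPolynomial σ R)),
      (pderiv j : Derivation R (MvPolynomial σ R) (MvPolynomial σ R))⁆ = 0 :=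
  derivation_ext fun k => by
    rw [Derivation.commutator_apply, pderiv_X, pderiv_X, Pi.single_apply, Pi.single_apply]
    split_ifs <;> simp

/- `Ring.instBracket` comes with no global `LieRing`/`LieAlgebra` instance, and the generic
lemmas do not unify with the scalar action on `Module.End K (MvPolynomial I K)`; hence these
restatements for the ring commutator. -/
namespace Ring

variable {A : Type*} [Ring A]

theorem lie_mul (a b c : A) : ⁅a, b * c⁆ = ⁅a, b⁆ * c + b * ⁅a, c⁆ := by
  simp only [lie_def]
  noncomm_ring

theorem sum_lie {ι : Type*} (s : Finset ι) (f : ι → A) (c : A) :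
    ⁅∑ i ∈ s, f i, c⁆ = ∑ i ∈ s, ⁅f i, c⁆ := by
  simp only [lie_def, Finset.sum_mul, Finset.mul_sum, Finset.sum_sub_distrib]

theorem lie_sum {ι : Type*} (s : Finset ι) (f : ι → A) (c : A) :
    ⁅c, ∑ i ∈ s, f i⁆ = ∑ i ∈ s, ⁅c, f i⁆ := by
  simp only [lie_def, Finset.sum_mul, Finset.mul_sum, Finset.sum_sub_distrib]

end Ring

namespace Module.End

variable {R M : Type*} [CommSemiring R] [AddCommGroup M] [Module R M]

theorem smul_lie (r : R) (f g : Module.End R M) : ⁅r • f, g⁆ = r • ⁅f, g⁆ := by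
  simp only [Ring.lie_def, smul_mul_assoc, mul_smul_comm, smul_sub]

theorem lie_smul (r : R) (f g : Module.End R M) : ⁅f, r • g⁆ = r • ⁅f, g⁆ := by
  simp only [Ring.lie_def, smul_mul_assoc, mul_smul_comm, smul_sub]

end Module.End

section FockSpace

variable (K : Type*) [CommRing K] {I : Type*}

theorem lie_Dop_Mop (β γ : I) : ⁅Dop K β, Mop K γ⁆ = if β = γ then 1 else 0 := by
  refine LinearMap.ext fun p => ?_
  simp only [Ring.lie_def, LinearMap.sub_apply, Module.End.mul_apply, Dop, Mop,
    LinearMap.mulLeft_apply, Derivation.coeFn_coe, MvPolynomial.pderiv_mul]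
  split_ifs with h
  · subst h; simp
  · simp [MvPolynomial.pderiv_X_of_ne (Ne.symm h)]

theorem lie_Dop_Dop (α β : I) : ⁅Dop K α, Dop K β⁆ = 0 := by
  refine LinearMap.ext fun p => ?_
  have := congrArg (fun D => D p) (MvPolynomial.lie_pderiv_pderiv (R := K) α β)
  simpa [Derivation.commutator_apply, Ring.lie_def, Dop, sub_eq_zero] using this

theorem lie_Dop_Nop (J : Set I) (β γ α : I) :
    ⁅Dop K β, Nop K J γ α⁆ = if β = γ then Dop K α else 0 := by
  by_cases h : γ = α ∧ α ∈ J
  · obtain ⟨rfl, hα⟩ := h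
    rw [Nop, if_pos ⟨rfl, hα⟩, ← Module.End.mul_eq_comp, Ring.lie_mul, lie_Dop_Mop, lie_Dop_Dop]
    split_ifs <;> simp
  · rw [Nop, if_neg h, ← Module.End.mul_eq_comp, Ring.lie_mul, lie_Dop_Mop, lie_Dop_Dop]
    split_ifs <;> simp

end FockSpace

section

variable {K : Type*} [Field K] {L : Type*} [LieRing L] [LieAlgebra K L]
    {W : Type*} [AddCommGroup W] [Module K W] [LieRingModule L W] [LieModule K L W]
    {I : Type*} [Fintype I] (b : Module.Basis I K W) (J : Set I) (x : L)

theorem lie_Dop_fock (β : I) :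
    ⁅Dop K β, fock b J x⁆ = ∑ α : I, b.repr ⁅x, b α⁆ β • Dop K α := by
  simp only [fock, Ring.lie_sum, Module.End.lie_smul, lie_Dop_Nop, smul_ite, smul_zero,
    Finset.sum_ite_eq, Finset.mem_univ, if_true]

theorem lie_sum_smul_Dop_fock (lam : Module.Dual K W) :
    ⁅∑ β : I, lam (b β) • Dop K β, fock b J x⁆ = ∑ α : I, lam ⁅x, b α⁆ • Dop K α := by
  have lam_eq_sum (v : W) : lam v = ∑ β : I, b.repr v β * lam (b β) := by
    conv_lhs => rw [← b.sum_repr v]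
    simp only [map_sum, map_smul, smul_eq_mul]
  simp only [Ring.sum_lie, Module.End.smul_lie, lie_Dop_fock, Finset.smul_sum, smul_smul]
  rw [Finset.sum_comm]
  simp only [lam_eq_sum ⁅x, _⁆, Finset.sum_smul, mul_comm]

end

theorem stmt4_general (K : Type*) [Field K]
    (L : Type*) [LieRing L] [LieAlgebra K L]
    (W : Type*) [AddCommGroup W] [Module K W] [LieRingModule L W] [LieModule K L W]
    (I : Type*) [Fintype I] (b : Module.Basis I K W) (J : Set I)
    (x : L) (lam : Module.Dual K W) :
    ⁅fock b J x, ∑ α : I, lam (b α) • Dop K α⁆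
      = ∑ α : I, (-(lam ∘ₗ (LieModule.toEnd K L W x : W →ₗ[K] W))) (b α) • Dop K α := by
  calc ⁅fock b J x, ∑ α : I, lam (b α) • Dop K α⁆
      = -⁅∑ α : I, lam (b α) • Dop K α, fock b J x⁆ := (neg_sub _ _).symm
    _ = -∑ α : I, lam ⁅x, b α⁆ • Dop K α := by rw [lie_sum_smul_Dop_fock]
    _ = _ := by
      rw [← Finset.sum_neg_distrib]
      exact Finset.sum_congr rfl fun α _ => (neg_smul _ _).symm

/-- for every `x ∈ 𝔤` and `λ ∈ W*`, the commutator of operators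
`[f_x, D_λ]` equals `D_{x·λ}`, where `D_λ = Σ_α λ(e_α) D_α` and the dual action is
`(x·λ)(w) = −λ(x·w)`, i.e. `x·λ = −(λ ∘ toEnd x)`. -/
theorem stmt4 (K : Type*) [Field K] [CharZero K]
    (L : Type*) [LieRing L] [LieAlgebra K L]
    (W : Type*) [AddCommGroup W] [Module K W] [LieRingModule L W] [LieModule K L W]
    (I : Type*) [Fintype I] (b : Module.Basis I K W) (J : Set I)
    (x : L) (lam : Module.Dual K W) :
    ⁅fock b J x, ∑ α : I, lam (b α) • Dop K α⁆
      = ∑ α : I, (-(lam ∘ₗ (LieModule.toEnd K L W x : W →ₗ[K] W))) (b α) • Dop K α :=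
  stmt4_general K L W I b J x lam
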